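/- arXiv:1401.8179 — 4 statements merged into one kernel-verified Lean document; each statement's English description precedes it below -/
import Mathlib

section
/- Let K be a field, let A, B ∈ K, and let u, v ∈ K satisfy v² = u³ + Au + B. Then, setting a = 3u² + A, b = −2v, and c = −3u³ − Au + 2v² (the coefficients of the tangent line to the curve y² = x³ + Ax + B at the point (u, v)), one has a⁴ − 3Ab⁴ + 6ab²c = (3u⁴ + 6Au² + 12Bu − A²)². In particular, the quartic curve a⁴ − 3Ab⁴ + 6ab²c = 0 in the dual projective plane passes through the points corresponding to the tangent lines of E at its nontrivial 3-torsion points, since 3u⁴ + 6Au² + 12Bu − A² is the third division polynomial of E. -/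
/-- For a point `(u, v)` on the elliptic curve `y² = x³ + Ax + B` over a field `K`, the
coefficients `a = 3u² + A`, `b = −2v`, `c = −3u³ − Au + 2v²` of the tangent line at `(u, v)`
satisfy `a⁴ − 3Ab⁴ + 6ab²c = ψ₃(u)²`, where `ψ₃(x) = 3x⁴ + 6Ax² + 12Bx − A²` is the third
division polynomial. In particular, the quartic `a⁴ − 3Ab⁴ + 6ab²c = 0` in the dual projective
plane passes through the points corresponding to the tangent lines of the curve at its
nontrivial 3-torsion points. -/
theorem quartic_through_inflection_lines {K : Type*} [Field K]
    (A B u v : K) (h : v ^ 2 = u ^ 3 + A * u + B) :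
    let a : K := 3 * u ^ 2 + A
    let b : K := -2 * v
    let c : K := -3 * u ^ 3 - A * u + 2 * v ^ 2
    a ^ 4 - 3 * A * b ^ 4 + 6 * a * b ^ 2 * c =
      (3 * u ^ 4 + 6 * A * u ^ 2 + 12 * B * u - A ^ 2) ^ 2 := by
  intro a b c
  simp only [a, b, c]
  linear_combination (144 * u ^ 2 * v ^ 2 - 72 * u ^ 5 - 24 * A ^ 2 * u + 144 * B * u ^ 2) * h
end

section
/- Let K be a field, let A, B ∈ K, and let x₁, y₁, x₂, y₂ ∈ K satisfy y₁² = x₁³ + Ax₁ + B and y₂² = x₂³ + Ax₂ + B. Set u = x₁ + x₂, v = x₁x₂, and ψ(u, v) = Bu³ + v³ + Au²v − 3Buv − 2Av² + ABu + A²v + B². Then (y₁·y₂·(x₁ − x₂))² = ψ(u, v)·(u² − 4v). -/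
/-- For two points `(x₁, y₁)`, `(x₂, y₂)` on the elliptic curve `y² = x³ + Ax + B` over a
field `K`, setting `u = x₁ + x₂`, `v = x₁x₂` and
`ψ(u, v) = Bu³ + v³ + Au²v − 3Buv − 2Av² + ABu + A²v + B²`, one has
`(y₁·y₂·(x₁ − x₂))² = ψ(u, v)·(u² − 4v)`. -/
theorem omega_squared_eq_psi {K : Type*} [Field K] (A B : K)
    (x₁ y₁ x₂ y₂ : K)
    (h₁ : y₁ ^ 2 = x₁ ^ 3 + A * x₁ + B) (h₂ : y₂ ^ 2 = x₂ ^ 3 + A * x₂ + B) :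
    let u : K := x₁ + x₂
    let v : K := x₁ * x₂
    (y₁ * y₂ * (x₁ - x₂)) ^ 2 =
      (B * u ^ 3 + v ^ 3 + A * u ^ 2 * v - 3 * B * u * v - 2 * A * v ^ 2 + A * B * u
        + A ^ 2 * v + B ^ 2) * (u ^ 2 - 4 * v) := by
  intro u v
  have h : (y₁ * y₂ * (x₁ - x₂)) ^ 2 = (y₁^2) * (y₂^2) * (x₁ - x₂)^2 := by ring
  rw [h, h₁, h₂]; ring
end

section
/- Let K be a field of characteristic zero, let A, B ∈ K, and let λ ∈ K with λ ≠ 0. Set u = λ and v = (λ³ + Aλ + 2B)/(3λ), and let ψ(u, v) = Bu³ + v³ + Au²v − 3Buv − 2Av² + ABu + A²v + B². Then ψ(u, v)·(u² − 4v) = −(λ³ + Aλ − B)²·(λ³ + 4Aλ + 8B)²/(81λ⁴). -/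
/-- For `λ ≠ 0` in a field `K` of characteristic zero, setting `u = λ` and
`v = (λ³ + Aλ + 2B)/(3λ)` (a point of the cubic `u³ − 3uv + Au + 2B = 0`) and
`ψ(u, v) = Bu³ + v³ + Au²v − 3Buv − 2Av² + ABu + A²v + B²`, one has
`ψ(u, v)·(u² − 4v) = −(λ³ + Aλ − B)²·(λ³ + 4Aλ + 8B)²/(81λ⁴)`. -/
theorem psi_on_cubic_parametrization {K : Type*} [Field K] [CharZero K]
    (A B : K) (lam : K) (hlam : lam ≠ 0) :
    let u : K := lam
    let v : K := (lam ^ 3 + A * lam + 2 * B) / (3 * lam)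
    (B * u ^ 3 + v ^ 3 + A * u ^ 2 * v - 3 * B * u * v - 2 * A * v ^ 2 + A * B * u
        + A ^ 2 * v + B ^ 2) * (u ^ 2 - 4 * v) =
      -((lam ^ 3 + A * lam - B) ^ 2 * (lam ^ 3 + 4 * A * lam + 8 * B) ^ 2)
        / (81 * lam ^ 4) := by
  intro u v
  have h3lam : (3 : K) * lam ≠ 0 := mul_ne_zero three_ne_zero hlam
  have h81 : (81 : K) * lam ^ 4 ≠ 0 :=
    mul_ne_zero (by norm_num) (pow_ne_zero _ hlam)
  obtain ⟨w, hw⟩ : ∃ w : K, w = v := ⟨v, rfl⟩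
  have hw3 : w * (3 * lam) = lam ^ 3 + A * lam + 2 * B := by
    rw [hw]; exact div_mul_cancel₀ _ h3lam
  rw [← hw, eq_div_iff h81]
  linear_combination ((-32)*B ^ 3 + (-48)*lam*B ^ 2*w + 48*lam*A*B ^ 2 +
    (-72)*lam ^ 2*B*w ^ 2 + 96*lam ^ 2*A*B*w + (-108)*lam ^ 3*w ^ 3 + 72*lam ^ 3*B ^ 2 +
    180*lam ^ 3*A*w ^ 2 + (-48)*lam ^ 3*A ^ 2*w + (-16)*lam ^ 3*A ^ 3 + 294*lam ^ 4*B*w +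
    (-48)*lam ^ 4*A*B + (-9)*lam ^ 5*w ^ 2 + (-105)*lam ^ 5*A*w + (-24)*lam ^ 5*A ^ 2 +
    (-93)*lam ^ 6*B + (-3)*lam ^ 7*w + (-9)*lam ^ 7*A + (-1)*lam ^ 9) * hw3
end

section
/- Let K be a field of characteristic zero and let A, B ∈ K with 4A³ + 27B² ≠ 0. Then the polynomial 27A²X⁸ − 108BX⁶ − 18AX⁴ − 1 in K[X] is squarefree (equivalently, it has no repeated roots in an algebraic closure of K). -/
open Polynomial

/-- For a field `K` of characteristic zero and `A, B ∈ K` with `4A³ + 27B² ≠ 0`, the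
polynomial `27A²X⁸ − 108BX⁶ − 18AX⁴ − 1` is squarefree. -/
theorem poly_squarefree {K : Type*} [Field K] [CharZero K]
    (A B : K) (hAB : 4 * A ^ 3 + 27 * B ^ 2 ≠ 0) :
    Squarefree (C (27 * A ^ 2) * X ^ 8 - C (108 * B) * X ^ 6 - C (18 * A) * X ^ 4 - 1
      : K[X]) := by
  classical
  set f : K[X] := C (27 * A ^ 2) * X ^ 8 - C (108 * B) * X ^ 6 - C (18 * A) * X ^ 4 - 1
    with hf
  suffices hsep : f.Separable from hsep.squarefree
  set L := AlgebraicClosure K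
  let φ : K →+* L := algebraMap K L
  rw [← Polynomial.separable_map φ]
  by_contra hns
  rw [Separable, ← gcd_isUnit_iff, isUnit_iff_degree_eq_zero] at hns
  obtain ⟨x, hx⟩ := IsAlgClosed.exists_root _ hns
  have hroot1 : (f.map φ).IsRoot x := hx.dvd (gcd_dvd_left _ _)
  have hroot2 : (derivative (f.map φ)).IsRoot x := hx.dvd (gcd_dvd_right _ _)
  rw [hf] at hroot1
  simp only [IsRoot] at hroot1
  simp [map_ofNat] at hroot1
  rw [derivative_map, hf] at hroot2
  simp only [IsRoot] at hroot2
  simp [derivative_pow, map_ofNat] at hroot2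
  set a : L := φ A
  set b : L := φ B
  have h1 : 27 * a ^ 2 * x ^ 8 - 108 * b * x ^ 6 - 18 * a * x ^ 4 - 1 = 0 := by
    linear_combination hroot1
  have h2 : 216 * a ^ 2 * x ^ 7 - 648 * b * x ^ 5 - 72 * a * x ^ 3 = 0 := by
    linear_combination hroot2
  have hD : 4 * a ^ 3 + 27 * b ^ 2 ≠ 0 := by
    intro h
    apply hAB
    apply φ.injective
    rw [map_add, map_mul, map_mul, map_pow, map_pow, map_ofNat, map_ofNat, map_zero]
    exact h
  have hx0 : x ≠ 0 := by
    intro h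
    rw [h] at h1
    simp at h1
  have h2' : 3 * a ^ 2 * x ^ 4 - 9 * b * x ^ 2 - a = 0 := by
    have h72 : (72 : L) * x ^ 3 * (3 * a ^ 2 * x ^ 4 - 9 * b * x ^ 2 - a) = 0 := by
      linear_combination h2
    rcases mul_eq_zero.mp h72 with h | h
    · rcases mul_eq_zero.mp h with h | h
      · exact absurd h (by norm_num)
      · exact absurd ((pow_eq_zero_iff (by norm_num : (3:ℕ) ≠ 0)).mp h) hx0
    · exact h
  rcases eq_or_ne a 0 with ha | ha
  · -- a = 0 : then 9 b x² = 0, with b ≠ 0, x ≠ 0 : contradiction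
    have hb : b ≠ 0 := by
      intro hb
      apply hD
      rw [ha, hb]; ring
    have h9 : (9 : L) * b * x ^ 2 = 0 := by
      rw [ha] at h2'
      linear_combination -h2'
    rcases mul_eq_zero.mp h9 with h | h
    · rcases mul_eq_zero.mp h with h | h
      · norm_num at h
      · exact hb h
    · exact hx0 ((pow_eq_zero_iff (by norm_num : (2:ℕ) ≠ 0)).mp h)
  · -- a ≠ 0
    have key : 27 * a ^ 2 * ((4 * a ^ 3 + 27 * b ^ 2) * (9 * b * x ^ 2 + a)) = 0 := by
      linear_combination (243 * a ^ 6 * x ^ 4 - 243 * a ^ 4 * b * x ^ 2 - 81 * a ^ 5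
        - 729 * a ^ 2 * b ^ 2) * h2' - 27 * a ^ 6 * h1
    have h3 : 9 * b * x ^ 2 + a = 0 := by
      rcases mul_eq_zero.mp key with h | h
      · rcases mul_eq_zero.mp h with h | h
        · exact absurd h (by norm_num)
        · exact absurd ((pow_eq_zero_iff (by norm_num : (2:ℕ) ≠ 0)).mp h) ha
      · rcases mul_eq_zero.mp h with h | h
        · exact absurd h hD
        · exact h
    have h4 : 3 * (a ^ 2 * x ^ 4) = 0 := by linear_combination h2' + h3
    rcases mul_eq_zero.mp h4 with h | h
    · norm_num at h
    · rcases mul_eq_zero.mp h with h | h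
      · exact ha ((pow_eq_zero_iff (by norm_num : (2:ℕ) ≠ 0)).mp h)
      · exact hx0 ((pow_eq_zero_iff (by norm_num : (4:ℕ) ≠ 0)).mp h)
end
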